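/- arXiv:1208.5019 — 2 statements merged into one kernel-verified Lean document; each statement's English description precedes it below -/
import Mathlib

section
/- Let (x_k)_{k≥0} be a sequence of reals with x_k ∈ [1/2, 1] for all k, satisfying x_k = x_{k+1}² + x_{k+1}³ for all k ≥ 0. Then (x_k) is monotone (either nondecreasing or nonincreasing), x_k → (√5 − 1)/2 as k → ∞, and for every k ≥ 1, −(4/7)^k ≤ x_k − (√5 − 1)/2 ≤ ((7 − √5)/2)^k. -/
open Filter Topology

/-- **Theorem (recursion `x_k = g(x_{k+1})` with `g(x) = x² + x³`).**
If `x_k ∈ [1/2, 1]` and `x_k = x_{k+1}² + x_{k+1}³` for all `k`, then `(x_k)` is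
monotone, converges to `(√5 − 1)/2`, and satisfies
`−(4/7)^k ≤ x_k − (√5 − 1)/2 ≤ ((7 − √5)/2)^k` for all `k ≥ 1`. -/
theorem golden_recursion (x : ℕ → ℝ)
    (hmem : ∀ k, x k ∈ Set.Icc (1 / 2 : ℝ) 1)
    (hrec : ∀ k, x k = (x (k + 1)) ^ 2 + (x (k + 1)) ^ 3) :
    (Monotone x ∨ Antitone x) ∧
    Tendsto x atTop (𝓝 ((Real.sqrt 5 - 1) / 2)) ∧
    ∀ k ≥ 1,
      -((4 / 7 : ℝ)) ^ k ≤ x k - (Real.sqrt 5 - 1) / 2 ∧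
      x k - (Real.sqrt 5 - 1) / 2 ≤ ((7 - Real.sqrt 5) / 2) ^ k := by
  set a : ℝ := (Real.sqrt 5 - 1) / 2 with ha
  have h5 : Real.sqrt 5 ^ 2 = 5 := Real.sq_sqrt (by norm_num)
  have h5pos : (0:ℝ) ≤ Real.sqrt 5 := Real.sqrt_nonneg 5
  have hs2 : (2:ℝ) ≤ Real.sqrt 5 := by nlinarith
  have hs3 : Real.sqrt 5 ≤ 3 := by nlinarith
  have haq : a ^ 2 + a = 1 := by rw [ha]; nlinarith
  have ha12 : (1/2 : ℝ) ≤ a := by rw [ha]; linarith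
  have ha1 : a ≤ 1 := by rw [ha]; linarith
  have hga : a ^ 2 + a ^ 3 = a := by nlinarith
  -- key factorization
  have key : ∀ k, ∃ c : ℝ, 7/4 ≤ c ∧ x k - a = (x (k+1) - a) * c := by
    intro k
    obtain ⟨hl, hu⟩ := hmem (k+1)
    refine ⟨x (k+1) + a + (x (k+1))^2 + x (k+1) * a + a^2, by nlinarith, ?_⟩
    rw [hrec k]
    nlinarith [hga]
  -- sign preservation
  have sign : ∀ k, a ≤ x k ↔ a ≤ x (k+1) := by
    intro k
    obtain ⟨c, hc, heq⟩ := key k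
    constructor
    · intro h; nlinarith
    · intro h; nlinarith
  -- the geometric bound
  have bound : ∀ k, |x k - a| ≤ (1/2) * (4/7)^k := by
    intro k
    induction k with
    | zero =>
      obtain ⟨hl, hu⟩ := hmem 0
      rw [abs_le]; constructor <;> simp <;> linarith
    | succ n ih =>
      obtain ⟨c, hc, heq⟩ := key n
      have h1 : |x n - a| = |x (n+1) - a| * c := by
        rw [heq, abs_mul, abs_of_nonneg (by linarith : (0:ℝ) ≤ c)]
      have h2 : |x (n+1) - a| * (7/4) ≤ |x n - a| := by
        rw [h1]
        exact mul_le_mul_of_nonneg_left hc (abs_nonneg _)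
      have h3 : |x (n+1) - a| ≤ (4/7) * |x n - a| := by linarith
      calc |x (n+1) - a| ≤ (4/7) * |x n - a| := h3
        _ ≤ (4/7) * ((1/2) * (4/7)^n) := by
            apply mul_le_mul_of_nonneg_left ih; norm_num
        _ = (1/2) * (4/7)^(n+1) := by ring
  refine ⟨?_, ?_, ?_⟩
  · -- monotone or antitone
    rcases le_or_gt a (x 0) with h0 | h0
    · right
      have hall : ∀ k, a ≤ x k := by
        intro k
        induction k with
        | zero => exact h0
        | succ n ih => exact (sign n).mp ih
      apply antitone_nat_of_succ_le
      intro n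
      have h1 := hrec n
      have h2 := hall (n+1)
      obtain ⟨hl, hu⟩ := hmem (n+1)
      have hfac : x (n+1) ^ 2 + x (n+1) ^ 3 - x (n+1)
          = x (n+1) * (x (n+1) - a) * (x (n+1) + a + 1) := by
        linear_combination x (n+1) * haq
      nlinarith [mul_nonneg (mul_nonneg (by linarith : (0:ℝ) ≤ x (n+1))
        (by linarith : (0:ℝ) ≤ x (n+1) - a)) (by linarith : (0:ℝ) ≤ x (n+1) + a + 1)]
    · left
      have hall : ∀ k, x k ≤ a := by
        intro k
        induction k with
        | zero => exact h0.le
        | succ n ih =>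
          by_contra h
          push_neg at h
          have := (sign n).mpr h.le
          have hne : x n ≠ a := by
            intro he
            obtain ⟨c, hc, heq⟩ := key n
            rw [he, sub_self] at heq
            have : x (n+1) = a := by
              rcases mul_eq_zero.mp heq.symm with h' | h'
              · linarith [sub_eq_zero.mp h']
              · linarith
            linarith
          have : x n = a := le_antisymm ih this
          exact hne this
      apply monotone_nat_of_le_succ
      intro n
      have h1 := hrec n
      have h2 := hall (n+1)
      obtain ⟨hl, hu⟩ := hmem (n+1)
      have hfac : x (n+1) ^ 2 + x (n+1) ^ 3 - x (n+1)
          = x (n+1) * (x (n+1) - a) * (x (n+1) + a + 1) := by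
        linear_combination x (n+1) * haq
      nlinarith [mul_nonneg (mul_nonneg (by linarith : (0:ℝ) ≤ x (n+1))
        (by linarith : (0:ℝ) ≤ a - x (n+1))) (by linarith : (0:ℝ) ≤ x (n+1) + a + 1)]
  · -- convergence
    rw [← tendsto_sub_nhds_zero_iff]
    apply squeeze_zero_norm (fun n => bound n)
    have : Tendsto (fun n : ℕ => (4/7 : ℝ)^n) atTop (𝓝 0) :=
      tendsto_pow_atTop_nhds_zero_of_lt_one (by norm_num) (by norm_num)
    have := this.const_mul (1/2 : ℝ)
    simpa using this
  · intro k hk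
    have hb := bound k
    rw [abs_le] at hb
    have hp : (0:ℝ) ≤ (4/7:ℝ)^k := by positivity
    constructor
    · linarith [hb.1]
    · have h1 : x k - a ≤ 1 - a := by linarith [(hmem k).2]
      have h2 : (1:ℝ) ≤ ((7 - Real.sqrt 5)/2)^k :=
        one_le_pow₀ (by linarith)
      linarith
end

section
/- Let x, y ∈ [1/2, 1] satisfy x = y² + y³. Then x ≤ (√5 − 1)/2 if and only if y ≤ (√5 − 1)/2, and x < (√5 − 1)/2 if and only if y < (√5 − 1)/2. Consequently, if a cubic graph G has connective constant μ(G) ≥ φ = (√5+1)/2 (so μ(G)^{-1} ≤ φ^{-1}), then any graph obtained from G by a Fisher transformation, with the connective-constant relation μ(G)^{-1} = μ₁^{-2} + μ₁^{-3} and μ₁^{-1} ∈ [1/2,1], also satisfies μ₁ ≥ φ. -/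
/-!
The map `g y = y² + y³` is strictly increasing on `[0, ∞)` and fixes `φ⁻¹ = (√5 - 1)/2`,
because `φ⁻¹ (1 + φ⁻¹) = φ⁻¹ φ = 1`. Comparing `x = g y` with `φ⁻¹ = g φ⁻¹` is therefore
the same as comparing `y` with `φ⁻¹`. For the Fisher transformation apply this to
`y = μ₁⁻¹`, `x = μ⁻¹ ≤ φ⁻¹`, and invert.
-/

open Real goldenRatio Set

lemma strictMonoOn_sq_add_pow_three : StrictMonoOn (fun a : ℝ => a ^ 2 + a ^ 3) (Ici 0) :=
  fun _ ha _ _ hab =>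
    add_lt_add (pow_lt_pow_left₀ hab ha two_ne_zero) (pow_lt_pow_left₀ hab ha three_ne_zero)

lemma inv_goldenRatio_sq_add_pow_three : φ⁻¹ ^ 2 + φ⁻¹ ^ 3 = φ⁻¹ := by
  have h : 1 + φ⁻¹ = φ := by rw [inv_goldenRatio]; exact one_sub_goldenRatio
  calc φ⁻¹ ^ 2 + φ⁻¹ ^ 3 = φ⁻¹ ^ 2 * (1 + φ⁻¹) := by ring
    _ = φ⁻¹ := by rw [h, sq, mul_assoc, inv_mul_cancel₀ goldenRatio_ne_zero, mul_one]

lemma sq_add_pow_three_le_inv_goldenRatio_iff {y : ℝ} (hy : 0 ≤ y) :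
    y ^ 2 + y ^ 3 ≤ φ⁻¹ ↔ y ≤ φ⁻¹ := by
  conv_lhs => rw [← inv_goldenRatio_sq_add_pow_three]
  exact strictMonoOn_sq_add_pow_three.le_iff_le hy (inv_nonneg.2 goldenRatio_pos.le)

lemma sq_add_pow_three_lt_inv_goldenRatio_iff {y : ℝ} (hy : 0 ≤ y) :
    y ^ 2 + y ^ 3 < φ⁻¹ ↔ y < φ⁻¹ := by
  conv_lhs => rw [← inv_goldenRatio_sq_add_pow_three]
  exact strictMonoOn_sq_add_pow_three.lt_iff_lt hy (inv_nonneg.2 goldenRatio_pos.le)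

lemma goldenRatio_eq_sqrt_five_add_one_div_two : φ = (√5 + 1) / 2 :=
  congrArg (· / 2) (add_comm 1 √5)

lemma inv_goldenRatio_eq_sqrt_five_sub_one_div_two : φ⁻¹ = (√5 - 1) / 2 := by
  rw [inv_goldenRatio]; ring

theorem golden_comparison_general (x y : ℝ)
    (hy : y ∈ Set.Icc (1 / 2 : ℝ) 1)
    (hrel : x = y ^ 2 + y ^ 3) :
    (x ≤ (Real.sqrt 5 - 1) / 2 ↔ y ≤ (Real.sqrt 5 - 1) / 2) ∧
    (x < (Real.sqrt 5 - 1) / 2 ↔ y < (Real.sqrt 5 - 1) / 2) ∧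
    (∀ μ μ₁ : ℝ, 0 < μ →
      μ⁻¹ = μ₁⁻¹ ^ 2 + μ₁⁻¹ ^ 3 → μ₁⁻¹ ∈ Set.Icc (1 / 2 : ℝ) 1 →
      (Real.sqrt 5 + 1) / 2 ≤ μ → (Real.sqrt 5 + 1) / 2 ≤ μ₁) := by
  have hy₀ : 0 ≤ y := by linarith [hy.1]
  rw [← inv_goldenRatio_eq_sqrt_five_sub_one_div_two,
    ← goldenRatio_eq_sqrt_five_add_one_div_two, hrel]
  refine ⟨sq_add_pow_three_le_inv_goldenRatio_iff hy₀,
    sq_add_pow_three_lt_inv_goldenRatio_iff hy₀, ?_⟩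
  intro μ μ₁ _ hμ hμ₁ hφμ
  have hμ₁_inv_pos : 0 < μ₁⁻¹ := by linarith [hμ₁.1]
  have hμ_le : μ⁻¹ ≤ φ⁻¹ := inv_anti₀ goldenRatio_pos hφμ
  have hμ₁_le : μ₁⁻¹ ≤ φ⁻¹ :=
    (sq_add_pow_three_le_inv_goldenRatio_iff hμ₁_inv_pos.le).1 (hμ ▸ hμ_le)
  exact (inv_le_inv₀ (inv_pos.1 hμ₁_inv_pos) goldenRatio_pos).1 hμ₁_le

/-- **Theorem (monotone comparison with the golden-mean fixed point).**
If `x, y ∈ [1/2, 1]` and `x = y² + y³`, then `x ≤ (√5 − 1)/2 ↔ y ≤ (√5 − 1)/2`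
and `x < (√5 − 1)/2 ↔ y < (√5 − 1)/2`.  Consequently, if `μ ≥ φ = (√5+1)/2` and
`μ⁻¹ = μ₁⁻² + μ₁⁻³` with `μ₁⁻¹ ∈ [1/2, 1]`, then `μ₁ ≥ φ`. -/
theorem golden_comparison (x y : ℝ)
    (hx : x ∈ Set.Icc (1 / 2 : ℝ) 1) (hy : y ∈ Set.Icc (1 / 2 : ℝ) 1)
    (hrel : x = y ^ 2 + y ^ 3) :
    (x ≤ (Real.sqrt 5 - 1) / 2 ↔ y ≤ (Real.sqrt 5 - 1) / 2) ∧
    (x < (Real.sqrt 5 - 1) / 2 ↔ y < (Real.sqrt 5 - 1) / 2) ∧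
    (∀ μ μ₁ : ℝ, 0 < μ →
      μ⁻¹ = μ₁⁻¹ ^ 2 + μ₁⁻¹ ^ 3 → μ₁⁻¹ ∈ Set.Icc (1 / 2 : ℝ) 1 →
      (Real.sqrt 5 + 1) / 2 ≤ μ → (Real.sqrt 5 + 1) / 2 ≤ μ₁) :=
  golden_comparison_general x y hy hrel
end
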